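/- For every N ∈ ℕ there exists a constant K, depending only on N, ε, n and the constants C_α, such that for every integer j ≥ 1, every cube Q ⊂ ℝⁿ of side-length 2^{−j(1−ε)} and every bump function φ of type j associated with Q, the high-frequency cutoff φ₂ := F^{−1}(1_{{ξ : |ξ| > 2^{j}/100}} · Fφ) satisfies ‖φ₂‖_{L^∞} ≤ K · 2^{−jN} and ‖Fφ₂‖_{L^∞} ≤ K · 2^{−jN}. -/

import Mathlib

open MeasureTheory
open scoped FourierTransform ENNReal

set_option maxHeartbeats 1000000

/-- `φ` is a bump function of type `j` associated with the cube of center `c` and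
side-length `2^{−j(1−ε)}` in `ℝⁿ`: it is smooth, `[0,1]`-valued, equal to `1` on the cube,
vanishes outside the concentric dilate by `1 + 2^{−εj}`, and its derivatives of order `k`
are bounded by `Cα k · 2^{k j (1−ε)}`. -/
def IsBump (n : ℕ) (ε : ℝ) (Cα : ℕ → ℝ) (j : ℤ) (c : EuclideanSpace ℝ (Fin n))
    (φ : EuclideanSpace ℝ (Fin n) → ℝ) : Prop :=
  ContDiff ℝ (⊤ : ℕ∞) φ ∧ (∀ x, φ x ∈ Set.Icc (0 : ℝ) 1) ∧
    (∀ x : EuclideanSpace ℝ (Fin n),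
      (∀ i, |x i - c i| ≤ (2 : ℝ) ^ (-(j : ℝ) * (1 - ε)) / 2) → φ x = 1) ∧
    (∀ x : EuclideanSpace ℝ (Fin n),
      ¬ (∀ i, |x i - c i| ≤ (1 + (2 : ℝ) ^ (-ε * (j : ℝ))) * (2 : ℝ) ^ (-(j : ℝ) * (1 - ε)) / 2)
        → φ x = 0) ∧
    (∀ (k : ℕ) (x : EuclideanSpace ℝ (Fin n)),
      ‖iteratedFDeriv ℝ k φ x‖ ≤ Cα k * (2 : ℝ) ^ ((k : ℝ) * (j : ℝ) * (1 - ε)))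

/-- For every `N` there is a constant `K`, depending only on `N`, `ε`, `n`
and the constants `Cα`, such that for every integer `j ≥ 1`, every cube `Q` of side-length
`2^{−j(1−ε)}` and every bump function `φ` of type `j` associated with `Q`, the
high-frequency cutoff `φ₂ = 𝓕⁻¹(1_{{|ξ| > 2^j/100}} · 𝓕φ)` satisfies
`‖φ₂‖_{L^∞} ≤ K·2^{−jN}` and `‖𝓕φ₂‖_{L^∞} ≤ K·2^{−jN}` (here `𝓕φ₂` is, by construction,
the function `1_{{|ξ| > 2^j/100}} · 𝓕φ` of which `φ₂` is the inverse Fourier transform). -/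
theorem bump_highfreq_cutoff_small
    (n : ℕ) (hn : 1 ≤ n) (ε : ℝ) (hε : ε ∈ Set.Ioo (0 : ℝ) 1)
    (Cα : ℕ → ℝ) (N : ℕ) :
    ∃ K > (0 : ℝ), ∀ j : ℤ, 1 ≤ j → ∀ (c : EuclideanSpace ℝ (Fin n))
      (φ : EuclideanSpace ℝ (Fin n) → ℝ), IsBump n ε Cα j c φ →
      (∀ x : EuclideanSpace ℝ (Fin n),
        ‖𝓕⁻ (fun ξ : EuclideanSpace ℝ (Fin n) =>
            Set.indicator {ξ : EuclideanSpace ℝ (Fin n) | (2 : ℝ) ^ (j : ℝ) / 100 < ‖ξ‖}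
              (𝓕 (fun y => ((φ y : ℝ) : ℂ))) ξ : EuclideanSpace ℝ (Fin n) → ℂ) x‖
          ≤ K * (2 : ℝ) ^ (-(j : ℝ) * (N : ℝ))) ∧
      (∀ ξ : EuclideanSpace ℝ (Fin n),
        ‖Set.indicator {ξ : EuclideanSpace ℝ (Fin n) | (2 : ℝ) ^ (j : ℝ) / 100 < ‖ξ‖}
            (𝓕 (fun y => ((φ y : ℝ) : ℂ))) ξ‖
          ≤ K * (2 : ℝ) ^ (-(j : ℝ) * (N : ℝ))) := by
  obtain ⟨hε0, hε1⟩ := hε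
  set k : ℕ := ⌈((N : ℝ) + n + 1) / ε⌉₊ with hk_def
  set m : ℕ := n + 1 + k with hm_def
  have hkm : (k : ℝ) ≤ m := by exact_mod_cast Nat.le_add_left k (n + 1)
  have hkε : (N : ℝ) + n + 1 ≤ (k : ℝ) * ε := by
    have h := Nat.le_ceil (((N : ℝ) + n + 1) / ε)
    rw [div_le_iff₀ hε0] at h
    exact h.trans (by nlinarith [Nat.le_ceil (((N : ℝ) + n + 1) / ε)] )
  set V : ℝ := (volume (Metric.closedBall (0 : EuclideanSpace ℝ (Fin n)) (Real.sqrt n))).toReal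
    with hV_def
  have hV : 0 ≤ V := ENNReal.toReal_nonneg
  set S : ℝ := ∑ i ∈ Finset.range (m + 1), |Cα i| with hS_def
  have hS : 0 ≤ S := Finset.sum_nonneg fun i _ => abs_nonneg _
  set D : ℝ := 2 ^ m * S * V with hD_def
  have hD : 0 ≤ D := by
    apply mul_nonneg (mul_nonneg (by positivity) hS) hV
  set I : ℝ := ∫ ξ : EuclideanSpace ℝ (Fin n), (1 + ‖ξ‖) ^ (-((n : ℝ) + 1)) with hI_def
  have hI : 0 ≤ I := integral_nonneg fun ξ => by positivity
  have hKa : 0 ≤ D * 100 ^ m := mul_nonneg hD (by positivity)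
  have hKb : 0 ≤ D * 51 ^ (n + 1) * 100 ^ k * I :=
    mul_nonneg (mul_nonneg (mul_nonneg hD (by positivity)) (by positivity)) hI
  refine ⟨1 + D * 100 ^ m + D * 51 ^ (n + 1) * 100 ^ k * I, by linarith, ?_⟩
  intro j hj c φ hφ
  obtain ⟨hsm, hrange, h1, h0, hder⟩ := hφ
  have hj1 : (1 : ℝ) ≤ (j : ℝ) := by exact_mod_cast hj
  set f : EuclideanSpace ℝ (Fin n) → ℂ := fun y => ((φ y : ℝ) : ℂ) with hf_def
  have hfc : ContDiff ℝ (⊤ : ℕ∞) f := Complex.ofRealCLM.contDiff.comp hsm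
  have hnormd : ∀ (i : ℕ) (x : EuclideanSpace ℝ (Fin n)),
      ‖iteratedFDeriv ℝ i f x‖ = ‖iteratedFDeriv ℝ i φ x‖ := fun i x =>
    Complex.ofRealLI.norm_iteratedFDeriv_comp_left hsm.contDiffAt (by exact_mod_cast le_top)
  -- support bound
  have hhalf : (1 + (2 : ℝ) ^ (-ε * (j : ℝ))) * (2 : ℝ) ^ (-(j : ℝ) * (1 - ε)) / 2 ≤ 1 := by
    have h1' : (2 : ℝ) ^ (-ε * (j : ℝ)) ≤ 1 :=
      Real.rpow_le_one_of_one_le_of_nonpos one_le_two (by nlinarith)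
    have h2' : (2 : ℝ) ^ (-(j : ℝ) * (1 - ε)) ≤ 1 :=
      Real.rpow_le_one_of_one_le_of_nonpos one_le_two (by nlinarith)
    have h3' : (0 : ℝ) < (2 : ℝ) ^ (-(j : ℝ) * (1 - ε)) := Real.rpow_pos_of_pos two_pos _
    nlinarith
  have hsupp : ∀ x, x ∉ Metric.closedBall c (Real.sqrt n) → f x = 0 := by
    intro x hx
    have hφx : φ x = 0 := by
      apply h0
      intro hall
      apply hx
      rw [Metric.mem_closedBall, dist_eq_norm]
      rw [EuclideanSpace.norm_eq]
      apply Real.sqrt_le_sqrt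
      calc ∑ i, ‖(x - c) i‖ ^ 2 ≤ ∑ _i : Fin n, (1 : ℝ) := by
            apply Finset.sum_le_sum
            intro i _
            have hxi : |x i - c i| ≤ 1 := (hall i).trans hhalf
            have : ‖(x - c) i‖ = |x i - c i| := by
              simp [PiLp.sub_apply, Real.norm_eq_abs]
            rw [this]
            nlinarith [abs_nonneg (x i - c i)]
        _ = (n : ℝ) := by simp
    simp [hf_def, hφx]
  have hcs : HasCompactSupport f :=
    HasCompactSupport.intro (isCompact_closedBall c _) hsupp
  have hts : tsupport f ⊆ Metric.closedBall c (Real.sqrt n) :=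
    closure_minimal (fun x hx => by_contra fun hc' => hx (hsupp x hc'))
      Metric.isClosed_closedBall
  have hInt : ∀ i : ℕ, Integrable (iteratedFDeriv ℝ i f) := fun i =>
    (hfc.continuous_iteratedFDeriv (by exact_mod_cast le_top)).integrable_of_hasCompactSupport (hcs.iteratedFDeriv i)
  have h'f : ∀ (a b : ℕ), (a : ℕ∞) ≤ (0 : ℕ∞) → (b : ℕ∞) ≤ (⊤ : ℕ∞) →
      Integrable (fun v => ‖v‖ ^ a * ‖iteratedFDeriv ℝ b f v‖) := by
    intro a b ha _
    have ha0 : a = 0 := by exact_mod_cast nonpos_iff_eq_zero.1 ha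
    subst ha0
    simpa using (hInt b).norm
  -- integral bounds for derivatives
  have hIb : ∀ i ∈ Finset.range (m + 1),
      (∫ v, ‖iteratedFDeriv ℝ i f v‖) ≤ |Cα i| * (2 : ℝ) ^ ((m : ℝ) * j * (1 - ε)) * V := by
    intro i hi
    have him : (i : ℝ) ≤ m := by exact_mod_cast Nat.lt_succ_iff.1 (Finset.mem_range.1 hi)
    have hpt : ∀ v, ‖iteratedFDeriv ℝ i f v‖ ≤
        Set.indicator (Metric.closedBall c (Real.sqrt n))
          (fun _ => |Cα i| * (2 : ℝ) ^ ((m : ℝ) * j * (1 - ε))) v := by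
      intro v
      by_cases hv : v ∈ Metric.closedBall c (Real.sqrt n)
      · rw [Set.indicator_of_mem hv]
        calc ‖iteratedFDeriv ℝ i f v‖ ≤ Cα i * 2 ^ ((i : ℝ) * j * (1 - ε)) := by
              rw [hnormd]; exact hder i v
          _ ≤ |Cα i| * 2 ^ ((m : ℝ) * j * (1 - ε)) := by
              apply mul_le_mul (le_abs_self _)
                (Real.rpow_le_rpow_of_exponent_le one_le_two
                  (mul_le_mul_of_nonneg_right (mul_le_mul_of_nonneg_right him
                    (show (0:ℝ) ≤ (j:ℝ) by linarith)) (show (0:ℝ) ≤ 1 - ε by linarith)))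
                (by positivity) (abs_nonneg _)
      · rw [Set.indicator_of_notMem hv]
        have hz : iteratedFDeriv ℝ i f v = 0 := by
          apply image_eq_zero_of_notMem_tsupport
          exact fun hmem' => hv (hts (tsupport_iteratedFDeriv_subset i hmem'))
        simp [hz]
    calc (∫ v, ‖iteratedFDeriv ℝ i f v‖)
        ≤ ∫ v, Set.indicator (Metric.closedBall c (Real.sqrt n))
            (fun _ => |Cα i| * (2 : ℝ) ^ ((m : ℝ) * j * (1 - ε))) v :=
          integral_mono (hInt i).norm
            ((integrable_indicator_iff measurableSet_closedBall).2
              (integrableOn_const measure_closedBall_lt_top.ne)) hpt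
      _ = |Cα i| * (2 : ℝ) ^ ((m : ℝ) * j * (1 - ε)) * V := by
          rw [integral_indicator_const _ measurableSet_closedBall, smul_eq_mul,
            measureReal_def, Measure.addHaar_closedBall_center]
          ring
  -- key decay estimate
  have KEY : ∀ ξ : EuclideanSpace ℝ (Fin n),
      ‖ξ‖ ^ m * ‖𝓕 f ξ‖ ≤ D * (2 : ℝ) ^ ((m : ℝ) * j * (1 - ε)) := by
    intro ξ
    have h := Real.pow_mul_norm_iteratedFDeriv_fourier_le (K := (0 : ℕ∞))
      (N := (⊤ : ℕ∞)) (hfc.of_le (by simp)) h'f le_rfl le_top ξ (k := 0) (n := m)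
    rw [norm_iteratedFDeriv_zero] at h
    have hsum : ∑ p ∈ Finset.range (0 + 1) ×ˢ Finset.range (m + 1),
        (∫ v, ‖v‖ ^ p.1 * ‖iteratedFDeriv ℝ p.2 f v‖)
        ≤ S * ((2 : ℝ) ^ ((m : ℝ) * j * (1 - ε)) * V) := by
      rw [Finset.sum_product]
      simp only [zero_add, Finset.range_one, Finset.sum_singleton, pow_zero, one_mul]
      calc ∑ i ∈ Finset.range (m + 1), (∫ v, ‖iteratedFDeriv ℝ i f v‖)
          ≤ ∑ i ∈ Finset.range (m + 1), |Cα i| * (2 : ℝ) ^ ((m : ℝ) * j * (1 - ε)) * V :=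
            Finset.sum_le_sum hIb
        _ = S * ((2 : ℝ) ^ ((m : ℝ) * j * (1 - ε)) * V) := by
            rw [hS_def, Finset.sum_mul]
            exact Finset.sum_congr rfl fun i _ => by ring
    simp only [pow_zero, one_mul, Nat.cast_zero, mul_zero, zero_add] at h
    refine h.trans ?_
    calc (2 : ℝ) ^ m * ∑ p ∈ Finset.range (0 + 1) ×ˢ Finset.range (m + 1),
          (∫ v, ‖v‖ ^ p.1 * ‖iteratedFDeriv ℝ p.2 f v‖)
        ≤ 2 ^ m * (S * ((2 : ℝ) ^ ((m : ℝ) * j * (1 - ε)) * V)) :=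
          mul_le_mul_of_nonneg_left hsum (by positivity)
      _ = D * (2 : ℝ) ^ ((m : ℝ) * j * (1 - ε)) := by rw [hD_def]; ring
  -- region facts
  have hR2 : (2 : ℝ) ≤ (2 : ℝ) ^ ((j : ℝ)) := by
    calc (2 : ℝ) = 2 ^ (1 : ℝ) := (Real.rpow_one 2).symm
      _ ≤ _ := Real.rpow_le_rpow_of_exponent_le one_le_two hj1
  have hR : (1 : ℝ) / 50 ≤ (2 : ℝ) ^ ((j : ℝ)) / 100 := by linarith
  have hR0 : (0 : ℝ) < (2 : ℝ) ^ ((j : ℝ)) / 100 := by positivity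
  have hD2 : 0 ≤ D * (2 : ℝ) ^ ((m : ℝ) * j * (1 - ε)) := mul_nonneg hD (by positivity)
  have hmε : (N : ℝ) ≤ (m : ℝ) * ε := by
    linarith [mul_le_mul_of_nonneg_right hkm hε0.le, Nat.cast_nonneg (α := ℝ) n]
  have hmnk : (m : ℝ) = (n : ℝ) + 1 + k := by rw [hm_def]; push_cast; ring
  -- the second (indicator) bound
  have INDIC : ∀ ξ : EuclideanSpace ℝ (Fin n),
      ‖Set.indicator {ξ : EuclideanSpace ℝ (Fin n) | (2 : ℝ) ^ (j : ℝ) / 100 < ‖ξ‖}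
          (𝓕 f) ξ‖ ≤ (1 + D * 100 ^ m + D * 51 ^ (n + 1) * 100 ^ k * I) *
            (2 : ℝ) ^ (-(j : ℝ) * (N : ℝ)) := by
    intro ξ
    have hrp : (0 : ℝ) ≤ (2 : ℝ) ^ (-(j : ℝ) * (N : ℝ)) := by positivity
    by_cases hmem : ξ ∈ {ξ : EuclideanSpace ℝ (Fin n) | (2 : ℝ) ^ (j : ℝ) / 100 < ‖ξ‖}
    · rw [Set.indicator_of_mem hmem]
      have hξ : (2 : ℝ) ^ ((j : ℝ)) / 100 < ‖ξ‖ := hmem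
      have h2 : ((2 : ℝ) ^ ((j : ℝ)) / 100) ^ m * ‖𝓕 f ξ‖ ≤
          D * (2 : ℝ) ^ ((m : ℝ) * j * (1 - ε)) :=
        le_trans (mul_le_mul_of_nonneg_right (pow_le_pow_left₀ hR0.le hξ.le m)
          (norm_nonneg _)) (KEY ξ)
      have h3 : ‖𝓕 f ξ‖ ≤ D * (2 : ℝ) ^ ((m : ℝ) * j * (1 - ε)) /
          ((2 : ℝ) ^ ((j : ℝ)) / 100) ^ m :=
        (le_div_iff₀ (pow_pos hR0 m)).2 (by rw [mul_comm]; exact h2)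
      refine h3.trans ?_
      have e1 : ((2 : ℝ) ^ ((j : ℝ)) / 100) ^ m = (2 : ℝ) ^ ((j : ℝ) * m) / 100 ^ m := by
        rw [div_pow, ← Real.rpow_natCast ((2 : ℝ) ^ ((j : ℝ))) m, ← Real.rpow_mul (by norm_num)]
      have e2 : D * (2 : ℝ) ^ ((m : ℝ) * j * (1 - ε)) / ((2 : ℝ) ^ ((j : ℝ) * m) / 100 ^ m)
          = D * 100 ^ m * (2 : ℝ) ^ ((m : ℝ) * j * (1 - ε) - (j : ℝ) * m) := by
        rw [Real.rpow_sub two_pos]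
        have : (0 : ℝ) < (2 : ℝ) ^ ((j : ℝ) * m) := Real.rpow_pos_of_pos two_pos _
        field_simp
      have e3 : (2 : ℝ) ^ ((m : ℝ) * j * (1 - ε) - (j : ℝ) * m) ≤
          (2 : ℝ) ^ (-(j : ℝ) * (N : ℝ)) := by
        apply Real.rpow_le_rpow_of_exponent_le one_le_two
        nlinarith [mul_le_mul_of_nonneg_left hmε (show (0 : ℝ) ≤ (j : ℝ) by linarith)]
      rw [e1, e2]
      calc D * 100 ^ m * (2 : ℝ) ^ ((m : ℝ) * j * (1 - ε) - (j : ℝ) * m)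
          ≤ D * 100 ^ m * (2 : ℝ) ^ (-(j : ℝ) * (N : ℝ)) :=
            mul_le_mul_of_nonneg_left e3 hKa
        _ ≤ _ := by nlinarith
    · rw [Set.indicator_of_notMem hmem]
      simp only [norm_zero]
      nlinarith
  refine ⟨?_, INDIC⟩
  -- the sup bound
  intro x
  set g : EuclideanSpace ℝ (Fin n) → ℂ := fun ξ =>
    Set.indicator {ξ : EuclideanSpace ℝ (Fin n) | (2 : ℝ) ^ (j : ℝ) / 100 < ‖ξ‖} (𝓕 f) ξ
    with hg_def
  set cst : ℝ := D * (2 : ℝ) ^ ((m : ℝ) * j * (1 - ε)) * 51 ^ (n + 1) /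
    ((2 : ℝ) ^ ((j : ℝ)) / 100) ^ k with hcst_def
  have hcst : 0 ≤ cst := div_nonneg (mul_nonneg hD2 (by positivity)) (by positivity)
  have hpt : ∀ ξ : EuclideanSpace ℝ (Fin n),
      ‖g ξ‖ ≤ cst * (1 + ‖ξ‖) ^ (-((n : ℝ) + 1)) := by
    intro ξ
    by_cases hmem : ξ ∈ {ξ : EuclideanSpace ℝ (Fin n) | (2 : ℝ) ^ (j : ℝ) / 100 < ‖ξ‖}
    · rw [hg_def]
      simp only []
      rw [Set.indicator_of_mem hmem]
      have hξ : (2 : ℝ) ^ ((j : ℝ)) / 100 < ‖ξ‖ := hmem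
      have hξ0 : (0 : ℝ) < ‖ξ‖ := lt_trans hR0 hξ
      have h3 : ‖𝓕 f ξ‖ ≤ D * (2 : ℝ) ^ ((m : ℝ) * j * (1 - ε)) / ‖ξ‖ ^ m :=
        (le_div_iff₀ (pow_pos hξ0 m)).2 (by rw [mul_comm]; exact KEY ξ)
      refine h3.trans ?_
      have hb1 : 1 + ‖ξ‖ ≤ 51 * ‖ξ‖ := by
        have : (1 : ℝ) / 50 < ‖ξ‖ := lt_of_le_of_lt hR hξ
        linarith
      have hrpow : (1 + ‖ξ‖) ^ (-((n : ℝ) + 1)) = ((1 + ‖ξ‖) ^ (n + 1 : ℕ))⁻¹ := by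
        rw [show -((n : ℝ) + 1) = -((n + 1 : ℕ) : ℝ) by push_cast; ring,
          Real.rpow_neg (by positivity), Real.rpow_natCast]
      rw [hrpow]
      rw [← div_eq_mul_inv]
      rw [div_le_div_iff₀ (pow_pos hξ0 m) (by positivity)]
      -- D2 * (1+‖ξ‖)^(n+1) ≤ cst * ‖ξ‖^m
      have key2 : (1 + ‖ξ‖) ^ (n + 1) * ((2 : ℝ) ^ ((j : ℝ)) / 100) ^ k ≤
          51 ^ (n + 1) * (‖ξ‖ ^ (n + 1) * ‖ξ‖ ^ k) := by
        have A : (1 + ‖ξ‖) ^ (n + 1) ≤ (51 * ‖ξ‖) ^ (n + 1) :=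
          pow_le_pow_left₀ (by positivity) hb1 _
        have B : ((2 : ℝ) ^ ((j : ℝ)) / 100) ^ k ≤ ‖ξ‖ ^ k := pow_le_pow_left₀ hR0.le hξ.le k
        calc (1 + ‖ξ‖) ^ (n + 1) * ((2 : ℝ) ^ ((j : ℝ)) / 100) ^ k
            ≤ (51 * ‖ξ‖) ^ (n + 1) * ‖ξ‖ ^ k :=
              mul_le_mul A B (by positivity) (by positivity)
          _ = 51 ^ (n + 1) * (‖ξ‖ ^ (n + 1) * ‖ξ‖ ^ k) := by rw [mul_pow]; ring
      have hRk : (0 : ℝ) < ((2 : ℝ) ^ ((j : ℝ)) / 100) ^ k := pow_pos hR0 k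
      have expand : cst * ‖ξ‖ ^ m = (D * (2 : ℝ) ^ ((m : ℝ) * j * (1 - ε)) /
          ((2 : ℝ) ^ ((j : ℝ)) / 100) ^ k) * (51 ^ (n + 1) * (‖ξ‖ ^ (n + 1) * ‖ξ‖ ^ k)) := by
        rw [hcst_def, hm_def, pow_add]
        field_simp
        ring
      rw [expand]
      calc D * (2 : ℝ) ^ ((m : ℝ) * j * (1 - ε)) * (1 + ‖ξ‖) ^ (n + 1)
          = (D * (2 : ℝ) ^ ((m : ℝ) * j * (1 - ε)) / ((2 : ℝ) ^ ((j : ℝ)) / 100) ^ k) *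
            ((1 + ‖ξ‖) ^ (n + 1) * ((2 : ℝ) ^ ((j : ℝ)) / 100) ^ k) := by
            field_simp
        _ ≤ _ := by
            apply mul_le_mul_of_nonneg_left key2 (div_nonneg hD2 hRk.le)
    · rw [hg_def]
      simp only []
      rw [Set.indicator_of_notMem hmem]
      simp only [norm_zero]
      positivity
  have step1 : ‖𝓕⁻ g x‖ ≤ ∫ ξ, ‖g ξ‖ := by
    rw [Real.fourierInv_eq]
    exact (norm_integral_le_integral_norm _).trans (le_of_eq (by simp [norm_smul]))
  have hintg : Integrable (fun ξ : EuclideanSpace ℝ (Fin n) =>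
      cst * (1 + ‖ξ‖) ^ (-((n : ℝ) + 1))) :=
    (integrable_one_add_norm (by simp [finrank_euclideanSpace_fin])).const_mul cst
  have step2 : (∫ ξ, ‖g ξ‖) ≤ cst * I := by
    calc (∫ ξ, ‖g ξ‖) ≤ ∫ ξ : EuclideanSpace ℝ (Fin n), cst * (1 + ‖ξ‖) ^ (-((n : ℝ) + 1)) :=
        integral_mono_of_nonneg (Filter.Eventually.of_forall fun ξ => norm_nonneg _)
          hintg (Filter.Eventually.of_forall hpt)
      _ = cst * I := by rw [hI_def, integral_const_mul]
  refine (step1.trans (step2.trans ?_))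
  -- cst * I ≤ K * 2^(-jN)
  have e1 : ((2 : ℝ) ^ ((j : ℝ)) / 100) ^ k = (2 : ℝ) ^ ((j : ℝ) * k) / 100 ^ k := by
    rw [div_pow, ← Real.rpow_natCast ((2 : ℝ) ^ ((j : ℝ))) k, ← Real.rpow_mul (by norm_num)]
  have e2 : cst * I = D * 51 ^ (n + 1) * 100 ^ k * I *
      (2 : ℝ) ^ ((m : ℝ) * j * (1 - ε) - (j : ℝ) * k) := by
    rw [hcst_def, e1, Real.rpow_sub two_pos]
    have h2jk : (0 : ℝ) < (2 : ℝ) ^ ((j : ℝ) * k) := Real.rpow_pos_of_pos two_pos _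
    field_simp
  have e3 : (2 : ℝ) ^ ((m : ℝ) * j * (1 - ε) - (j : ℝ) * k) ≤
      (2 : ℝ) ^ (-(j : ℝ) * (N : ℝ)) := by
    apply Real.rpow_le_rpow_of_exponent_le one_le_two
    have hjk : (j : ℝ) * ((N : ℝ) + n + 1) ≤ (j : ℝ) * ((k : ℝ) * ε) :=
      mul_le_mul_of_nonneg_left hkε (by linarith)
    nlinarith [mul_pos (show (0:ℝ) < (j:ℝ) by linarith) hε0,
      mul_nonneg (mul_nonneg (show (0:ℝ) ≤ (j:ℝ) by linarith) (Nat.cast_nonneg n)) hε0.le]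
  rw [e2]
  have hrp : (0 : ℝ) ≤ (2 : ℝ) ^ (-(j : ℝ) * (N : ℝ)) := by positivity
  calc D * 51 ^ (n + 1) * 100 ^ k * I * (2 : ℝ) ^ ((m : ℝ) * j * (1 - ε) - (j : ℝ) * k)
      ≤ D * 51 ^ (n + 1) * 100 ^ k * I * (2 : ℝ) ^ (-(j : ℝ) * (N : ℝ)) :=
        mul_le_mul_of_nonneg_left e3 hKb
    _ ≤ _ := by nlinarith
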